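/- Let Λ be a k-graph and x ∈ Λ^∞. Suppose there exists n ∈ ℕ^k such that every element of x(n)Λ^∞ that is frequently divertable to [x] is shift equivalent to x. Then for every y ∈ [x] there exists m ∈ ℕ^k such that every element of y(m)Λ^∞ that is frequently divertable to [x] is shift equivalent to x. -/

import Mathlib

/-- A `k`-graph: a countable small category (objects being identified with their
identity morphisms, so that the morphism set `M` carries everything) together with a
degree functor `d : Λ → ℕ^k` satisfying the unique factorisation property. -/
structure KGraph (k : ℕ) : Type 1 where
  M : Type
  countableM : Countable M
  rng : M → M
  src : M → M
  comp : M → M → M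
  d : M → Fin k → ℕ
  src_src : ∀ a, src (src a) = src a
  rng_src : ∀ a, rng (src a) = src a
  src_rng : ∀ a, src (rng a) = rng a
  rng_rng : ∀ a, rng (rng a) = rng a
  comp_src_self : ∀ a, comp a (src a) = a
  rng_comp_self : ∀ a, comp (rng a) a = a
  rng_comp : ∀ a b, src a = rng b → rng (comp a b) = rng a
  src_comp : ∀ a b, src a = rng b → src (comp a b) = src b
  comp_assoc : ∀ a b c, src a = rng b → src b = rng c →
    comp (comp a b) c = comp a (comp b c)
  d_src : ∀ a, d (src a) = 0
  d_comp : ∀ a b, src a = rng b → d (comp a b) = d a + d b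
  factor : ∀ a (m n : Fin k → ℕ), d a = m + n →
    ∃! p : M × M, src p.1 = rng p.2 ∧ comp p.1 p.2 = a ∧ d p.1 = m ∧ d p.2 = n

namespace KGraph

variable {k : ℕ}

/-- The objects of `Λ`, identified with the identity morphisms. -/
def IsObj (Λ : KGraph k) (v : Λ.M) : Prop := Λ.rng v = v

/-- `Λ` is row-finite: each `vΛ^m` is finite. -/
def RowFinite (Λ : KGraph k) : Prop :=
  ∀ v, Λ.IsObj v → ∀ m : Fin k → ℕ, {a : Λ.M | Λ.rng a = v ∧ Λ.d a = m}.Finite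

/-- `Λ` has no sources: each `vΛ^m` is nonempty. -/
def NoSources (Λ : KGraph k) : Prop :=
  ∀ v, Λ.IsObj v → ∀ m : Fin k → ℕ, ∃ a : Λ.M, Λ.rng a = v ∧ Λ.d a = m

end KGraph

/-- An infinite path of a `k`-graph `Λ`: a degree-preserving functor `x : Ω_k → Λ`,
recorded by its values `seg m n _ = x(m, n)` on the morphisms `(m, n)` (for `m ≤ n`)
of `Ω_k`; the vertex `x(m)` is `seg m m _`. -/
structure InfPath {k : ℕ} (Λ : KGraph k) where
  seg : ∀ m n : Fin k → ℕ, m ≤ n → Λ.M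
  d_seg : ∀ m n (h : m ≤ n), Λ.d (seg m n h) = n - m
  rng_seg : ∀ m n (h : m ≤ n), Λ.rng (seg m n h) = seg m m le_rfl
  src_seg : ∀ m n (h : m ≤ n), Λ.src (seg m n h) = seg n n le_rfl
  comp_seg : ∀ m n p (h1 : m ≤ n) (h2 : n ≤ p),
    Λ.comp (seg m n h1) (seg n p h2) = seg m p (h1.trans h2)

namespace InfPath

variable {k : ℕ} {Λ : KGraph k}

/-- The vertex `x(n)` of an infinite path `x`. -/
def vert (x : InfPath Λ) (n : Fin k → ℕ) : Λ.M := x.seg n n le_rfl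

/-- The shift `σ^p(x)`, given by `σ^p(x)(m, n) = x(m + p, n + p)`. -/
def shift (x : InfPath Λ) (p : Fin k → ℕ) : InfPath Λ where
  seg m n h := x.seg (m + p) (n + p) (add_le_add h le_rfl)
  d_seg m n h := by
    rw [x.d_seg]
    funext i
    simp only [Pi.sub_apply, Pi.add_apply]
    omega
  rng_seg m n h := x.rng_seg _ _ _
  src_seg m n h := x.src_seg _ _ _
  comp_seg m n p' h1 h2 := x.comp_seg _ _ _ _ _

/-- `x` is shift equivalent to `y` with lag `n ∈ ℤ^k`: there are `p, q ∈ ℕ^k` with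
`p - q = n` and `σ^p(x) = σ^q(y)`. -/
def ShiftEquivLag (x y : InfPath Λ) (n : Fin k → ℤ) : Prop :=
  ∃ p q : Fin k → ℕ, (fun i => (p i : ℤ) - (q i : ℤ)) = n ∧ x.shift p = y.shift q

/-- `x` is shift equivalent to `y`. -/
def ShiftEquiv (x y : InfPath Λ) : Prop := ∃ n : Fin k → ℤ, ShiftEquivLag x y n

/-- `x` is frequently divertable to `[y]`: for every `n ∈ ℕ^k` there is a path in
`x(n)Λ^∞` which is shift equivalent to `y`. -/
def FreqDiv (x y : InfPath Λ) : Prop :=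
  ∀ n : Fin k → ℕ, ∃ z : InfPath Λ, z.vert 0 = x.vert n ∧ ShiftEquiv z y

/-- The cylinder topology on `Λ^∞`, generated by the cylinder sets
`Z(α) = {x : x(0, d(α)) = α}` for morphisms `α` of `Λ`. -/
instance : TopologicalSpace (InfPath Λ) :=
  TopologicalSpace.generateFrom
    {S | ∃ a : Λ.M, S = {x : InfPath Λ | x.seg 0 (Λ.d a) (zero_le : 0 ≤ Λ.d a) = a}}

end InfPath

/-! If `σ^p y = σ^q x`, then `y(n + p) = x(n + q)` is the source of the segment
`α = x(n, n + q)`, whose range is `x(n)`. A path `z` from `y(n + p)` that is frequently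
divertable to `[x]` extends to the path `w = α z` from `x(n)` with `σ^{d α} w = z`; `w` is
again frequently divertable to `[x]` (a diversion of `z` gets a segment of `w` prepended), so
`w ∼ x` by hypothesis, and hence `z ∼ w ∼ x`. -/

namespace KGraph

variable {k : ℕ} (Λ : KGraph k)

open Classical in
/-- The factorisation of `a` as a morphism of degree `m` followed by one of degree
`d a - m`; junk value `(a, a)` unless `m ≤ d a`. -/
noncomputable def factorAt (a : Λ.M) (m : Fin k → ℕ) : Λ.M × Λ.M :=
  if h : m ≤ Λ.d a then
    (Λ.factor a m (Λ.d a - m) (add_tsub_cancel_of_le h).symm).exists.choose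
  else (a, a)

variable {Λ}

theorem factorAt_spec {a : Λ.M} {m : Fin k → ℕ} (h : m ≤ Λ.d a) :
    Λ.src (Λ.factorAt a m).1 = Λ.rng (Λ.factorAt a m).2 ∧
      Λ.comp (Λ.factorAt a m).1 (Λ.factorAt a m).2 = a ∧
      Λ.d (Λ.factorAt a m).1 = m ∧ Λ.d (Λ.factorAt a m).2 = Λ.d a - m := by
  rw [factorAt, dif_pos h]
  exact (Λ.factor a m (Λ.d a - m) (add_tsub_cancel_of_le h).symm).exists.choose_spec

theorem d_rng (a : Λ.M) : Λ.d (Λ.rng a) = 0 := by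
  rw [← Λ.src_rng, Λ.d_src]

theorem factorAt_comp {u v : Λ.M} {m : Fin k → ℕ} (h : Λ.src u = Λ.rng v)
    (hm : Λ.d u = m) : Λ.factorAt (Λ.comp u v) m = (u, v) := by
  subst hm
  have hd := Λ.d_comp u v h
  have hle : Λ.d u ≤ Λ.d (Λ.comp u v) := hd ▸ le_self_add
  refine (Λ.factor _ _ _ hd).unique ?_ ⟨h, rfl, rfl, rfl⟩
  obtain ⟨h1, h2, h3, h4⟩ := factorAt_spec hle
  exact ⟨h1, h2, h3, by rw [h4, hd, add_tsub_cancel_left]⟩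

theorem factorAt_of_d_eq {a : Λ.M} {m : Fin k → ℕ} (h : Λ.d a = m) :
    Λ.factorAt a m = (a, Λ.src a) := by
  simpa only [Λ.comp_src_self] using factorAt_comp (Λ.rng_src a).symm h

theorem factorAt_zero (a : Λ.M) : Λ.factorAt a 0 = (Λ.rng a, a) := by
  simpa only [Λ.rng_comp_self] using factorAt_comp (Λ.src_rng a) (Λ.d_rng a)

theorem fst_factorAt_comp {u v : Λ.M} {m : Fin k → ℕ} (h : Λ.src u = Λ.rng v)
    (hm : m ≤ Λ.d u) : (Λ.factorAt (Λ.comp u v) m).1 = (Λ.factorAt u m).1 := by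
  obtain ⟨h1, h2, h3, -⟩ := factorAt_spec hm
  set u₁ := (Λ.factorAt u m).1
  set u₂ := (Λ.factorAt u m).2
  have h21 : Λ.src u₂ = Λ.rng v := by rw [← h, ← h2, Λ.src_comp _ _ h1]
  have hc : Λ.comp u v = Λ.comp u₁ (Λ.comp u₂ v) := by
    rw [← Λ.comp_assoc _ _ _ h1 h21, h2]
  rw [hc, factorAt_comp (by rwa [Λ.rng_comp _ _ h21]) h3]

end KGraph

namespace InfPath

variable {k : ℕ} {Λ : KGraph k}

theorem ext {x y : InfPath Λ} (h : ∀ m n (hmn : m ≤ n), x.seg m n hmn = y.seg m n hmn) :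
    x = y := by
  cases x; cases y
  congr
  funext m n hmn
  exact h m n hmn

theorem shift_zero (x : InfPath Λ) : x.shift 0 = x :=
  ext fun m n _ => by simp only [shift, add_zero]

theorem shift_shift (x : InfPath Λ) (p q : Fin k → ℕ) :
    (x.shift p).shift q = x.shift (q + p) :=
  ext fun m n _ => by simp only [shift, add_assoc]

theorem shiftEquiv_iff {x y : InfPath Λ} : ShiftEquiv x y ↔ ∃ p q, x.shift p = y.shift q :=
  ⟨fun ⟨_, p, q, _, h⟩ => ⟨p, q, h⟩, fun ⟨p, q, h⟩ => ⟨_, p, q, rfl, h⟩⟩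

theorem ShiftEquiv.symm {x y : InfPath Λ} (h : ShiftEquiv x y) : ShiftEquiv y x := by
  obtain ⟨p, q, h⟩ := shiftEquiv_iff.1 h
  exact shiftEquiv_iff.2 ⟨q, p, h.symm⟩

theorem ShiftEquiv.trans {x y z : InfPath Λ} (hxy : ShiftEquiv x y) (hyz : ShiftEquiv y z) :
    ShiftEquiv x z := by
  obtain ⟨p, q, hpq⟩ := shiftEquiv_iff.1 hxy
  obtain ⟨s, t, hst⟩ := shiftEquiv_iff.1 hyz
  refine shiftEquiv_iff.2 ⟨s + p, q + t, ?_⟩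
  calc x.shift (s + p) = (y.shift q).shift s := by rw [← hpq, shift_shift]
    _ = (y.shift s).shift q := by rw [shift_shift, shift_shift, add_comm]
    _ = z.shift (q + t) := by rw [hst, shift_shift]

theorem shiftEquiv_of_shift_eq {w z : InfPath Λ} {q : Fin k → ℕ} (h : w.shift q = z) :
    ShiftEquiv z w :=
  shiftEquiv_iff.2 ⟨0, q, by rw [shift_zero, h]⟩

/-- The infinite path whose initial segments of degree `n` are the `W n`. -/
noncomputable def ofInitSegs (W : (Fin k → ℕ) → Λ.M) (hd : ∀ n, Λ.d (W n) = n)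
    (hW : ∀ m n, m ≤ n → (Λ.factorAt (W n) m).1 = W m) : InfPath Λ where
  seg m n _ := (Λ.factorAt (W n) m).2
  d_seg m n h := by rw [(KGraph.factorAt_spec ((hd n).symm ▸ h)).2.2.2, hd]
  rng_seg m n h := by
    obtain ⟨h1, -⟩ := KGraph.factorAt_spec ((hd n).symm ▸ h)
    rw [← h1, hW m n h, KGraph.factorAt_of_d_eq (hd m)]
  src_seg m n h := by
    obtain ⟨h1, h2, -⟩ := KGraph.factorAt_spec ((hd n).symm ▸ h)
    rw [← Λ.src_comp _ _ h1, h2, KGraph.factorAt_of_d_eq (hd n)]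
  comp_seg m n p hmn hnp := by
    obtain ⟨h1, h2, -⟩ := KGraph.factorAt_spec ((hd n).symm ▸ hmn)
    obtain ⟨h1', h2', -⟩ := KGraph.factorAt_spec ((hd p).symm ▸ hnp)
    rw [hW m n hmn] at h1 h2
    rw [hW n p hnp] at h1' h2'
    have hsrc : Λ.src (Λ.factorAt (W n) m).2 = Λ.rng (Λ.factorAt (W p) n).2 := by
      rw [← Λ.src_comp _ _ h1, h2, h1']
    have hWp : W p = Λ.comp (W m) (Λ.comp (Λ.factorAt (W n) m).2 (Λ.factorAt (W p) n).2) := by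
      rw [← Λ.comp_assoc _ _ _ h1 hsrc, h2, h2']
    conv_rhs => rw [hWp, KGraph.factorAt_comp (by rwa [Λ.rng_comp _ _ hsrc]) (hd m)]

theorem ofInitSegs_vert (W : (Fin k → ℕ) → Λ.M) (hd : ∀ n, Λ.d (W n) = n)
    (hW : ∀ m n, m ≤ n → (Λ.factorAt (W n) m).1 = W m) (n : Fin k → ℕ) :
    (ofInitSegs W hd hW).vert n = Λ.src (W n) := by
  simp only [vert, ofInitSegs, KGraph.factorAt_of_d_eq (hd n)]

section Prepend

variable (z : InfPath Λ) (a : Λ.M)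

noncomputable def consSeg (n : Fin k → ℕ) : Λ.M := Λ.comp a (z.seg 0 n zero_le)

noncomputable def prependInit (n : Fin k → ℕ) : Λ.M := (Λ.factorAt (z.consSeg a n) n).1

variable {z a}

theorem d_consSeg (ha : Λ.src a = z.vert 0) (n : Fin k → ℕ) :
    Λ.d (z.consSeg a n) = Λ.d a + n := by
  rw [consSeg, Λ.d_comp _ _ (by rw [z.rng_seg]; exact ha), z.d_seg, tsub_zero]

theorem src_consSeg (ha : Λ.src a = z.vert 0) {m n : Fin k → ℕ} (h : m ≤ n) :
    Λ.src (z.consSeg a m) = Λ.rng (z.seg m n h) := by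
  rw [consSeg, Λ.src_comp _ _ (by rw [z.rng_seg]; exact ha), z.src_seg, z.rng_seg]

theorem comp_consSeg_seg (ha : Λ.src a = z.vert 0) {m n : Fin k → ℕ} (h : m ≤ n) :
    Λ.comp (z.consSeg a m) (z.seg m n h) = z.consSeg a n := by
  rw [consSeg, consSeg, Λ.comp_assoc _ _ _ (by rw [z.rng_seg]; exact ha)
    (by rw [z.src_seg, z.rng_seg]), z.comp_seg]

theorem le_d_consSeg (ha : Λ.src a = z.vert 0) (n : Fin k → ℕ) :
    n ≤ Λ.d (z.consSeg a n) :=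
  (d_consSeg ha n).symm ▸ le_add_self

theorem d_prependInit (ha : Λ.src a = z.vert 0) (n : Fin k → ℕ) :
    Λ.d (z.prependInit a n) = n :=
  (KGraph.factorAt_spec (le_d_consSeg ha n)).2.2.1

theorem fst_factorAt_prependInit (ha : Λ.src a = z.vert 0) {m n : Fin k → ℕ} (h : m ≤ n) :
    (Λ.factorAt (z.prependInit a n) m).1 = z.prependInit a m := by
  obtain ⟨h1, h2, -⟩ := KGraph.factorAt_spec (le_d_consSeg ha n)
  calc (Λ.factorAt (z.prependInit a n) m).1 = (Λ.factorAt (z.consSeg a n) m).1 := by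
        rw [prependInit, ← KGraph.fst_factorAt_comp h1 ((d_prependInit ha n).symm ▸ h), h2]
    _ = (Λ.factorAt (Λ.comp (z.consSeg a m) (z.seg m n h)) m).1 := by
        rw [comp_consSeg_seg ha]
    _ = z.prependInit a m := KGraph.fst_factorAt_comp (src_consSeg ha h) (le_d_consSeg ha m)

noncomputable def prepend (ha : Λ.src a = z.vert 0) : InfPath Λ :=
  ofInitSegs (z.prependInit a) (d_prependInit ha) fun _ _ => fst_factorAt_prependInit ha

theorem prepend_vert_zero (ha : Λ.src a = z.vert 0) : (prepend ha).vert 0 = Λ.rng a := by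
  have hc : z.consSeg a 0 = a := by
    rw [consSeg]
    exact (congrArg (Λ.comp a) ha.symm).trans (Λ.comp_src_self a)
  rw [prepend, ofInitSegs_vert, prependInit, hc, KGraph.factorAt_zero, Λ.src_rng]

theorem prependInit_add_d (ha : Λ.src a = z.vert 0) (n : Fin k → ℕ) :
    z.prependInit a (n + Λ.d a) = z.consSeg a n := by
  rw [prependInit, ← comp_consSeg_seg ha (le_self_add : n ≤ n + Λ.d a),
    KGraph.factorAt_comp (src_consSeg ha _) (by rw [d_consSeg ha, add_comm])]

theorem prepend_shift (ha : Λ.src a = z.vert 0) : (prepend ha).shift (Λ.d a) = z :=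
  ext fun m n h => by
    change (Λ.factorAt (z.prependInit a (n + Λ.d a)) (m + Λ.d a)).2 = z.seg m n h
    rw [prependInit_add_d ha, ← comp_consSeg_seg ha h,
      KGraph.factorAt_comp (src_consSeg ha h) (by rw [d_consSeg ha, add_comm])]

end Prepend

theorem exists_shift_eq_of_src_eq_vert {z : InfPath Λ} {a : Λ.M} (ha : Λ.src a = z.vert 0) :
    ∃ w : InfPath Λ, w.vert 0 = Λ.rng a ∧ w.shift (Λ.d a) = z :=
  ⟨prepend ha, prepend_vert_zero ha, prepend_shift ha⟩

theorem FreqDiv.of_shift {w x : InfPath Λ} {q : Fin k → ℕ} (h : FreqDiv (w.shift q) x) :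
    FreqDiv w x := by
  intro n
  obtain ⟨z, hz0, hzx⟩ := h (n ⊔ q - q)
  have hz0' : z.vert 0 = w.vert (n ⊔ q) :=
    hz0.trans (congrArg w.vert (tsub_add_cancel_of_le le_sup_right))
  obtain ⟨v, hv0, hvz⟩ :=
    exists_shift_eq_of_src_eq_vert (a := w.seg n (n ⊔ q) le_sup_left)
      ((w.src_seg _ _ _).trans hz0'.symm)
  exact ⟨v, hv0.trans (w.rng_seg _ _ _), (shiftEquiv_of_shift_eq hvz).symm.trans hzx⟩

def FreqDivRigid (x : InfPath Λ) (v : Λ.M) : Prop :=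
  ∀ z : InfPath Λ, z.vert 0 = v → FreqDiv z x → ShiftEquiv z x

theorem FreqDivRigid.src {x : InfPath Λ} {a : Λ.M} (h : FreqDivRigid x (Λ.rng a)) :
    FreqDivRigid x (Λ.src a) := by
  intro z hz0 hzx
  obtain ⟨w, hw0, hwz⟩ := exists_shift_eq_of_src_eq_vert hz0.symm
  have hwx : ShiftEquiv w x := h w hw0 (FreqDiv.of_shift (hwz ▸ hzx))
  exact (shiftEquiv_of_shift_eq hwz).trans hwx

end InfPath

theorem stmt7_general {k : ℕ} (Λ : KGraph k) (x : InfPath Λ)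
    (h : ∃ n : Fin k → ℕ, ∀ z : InfPath Λ, z.vert 0 = x.vert n →
      InfPath.FreqDiv z x → InfPath.ShiftEquiv z x) :
    ∀ y : InfPath Λ, InfPath.ShiftEquiv y x →
      ∃ m : Fin k → ℕ, ∀ z : InfPath Λ, z.vert 0 = y.vert m →
        InfPath.FreqDiv z x → InfPath.ShiftEquiv z x := by
  obtain ⟨n, hn⟩ := h
  intro y hyx
  obtain ⟨p, q, hpq⟩ := InfPath.shiftEquiv_iff.1 hyx
  refine ⟨n + p, ?_⟩
  have hv : y.vert (n + p) = Λ.src (x.seg n (n + q) le_self_add) :=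
    (congrArg (fun w => w.vert n) hpq).trans (x.src_seg _ _ _).symm
  show InfPath.FreqDivRigid x (y.vert (n + p))
  rw [hv]
  exact InfPath.FreqDivRigid.src ((x.rng_seg _ _ _).symm ▸ hn)

/-- Let `Λ` be a `k`-graph and `x ∈ Λ^∞`.  If there is `n ∈ ℕ^k` such that every
element of `x(n)Λ^∞` that is frequently divertable to `[x]` is shift equivalent to `x`,
then for every `y ∈ [x]` there is `m ∈ ℕ^k` such that every element of `y(m)Λ^∞` that
is frequently divertable to `[x]` is shift equivalent to `x`. -/
theorem stmt7 {k : ℕ} (hk : 1 ≤ k) (Λ : KGraph k) (x : InfPath Λ)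
    (h : ∃ n : Fin k → ℕ, ∀ z : InfPath Λ, z.vert 0 = x.vert n →
      InfPath.FreqDiv z x → InfPath.ShiftEquiv z x) :
    ∀ y : InfPath Λ, InfPath.ShiftEquiv y x →
      ∃ m : Fin k → ℕ, ∀ z : InfPath Λ, z.vert 0 = y.vert m →
        InfPath.FreqDiv z x → InfPath.ShiftEquiv z x :=
  stmt7_general Λ x h
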